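/- arXiv:1711.03064 — 2 statements merged into one kernel-verified Lean document; each statement's English description precedes it below -/
import Mathlib

section
/- Let C be a 2p×2p positive definite j-unitary matrix (C > 0, C j C = j, with j = diag(I_p, -I_p)), partitioned into p×p blocks C = [[c11,c12],[c21,c22]]. Then c11 is invertible and the matrix ρ = c11^{-1} c12 is the unique matrix satisfying the Halmos extension representation C = D·F with F = [[I_p,ρ],[ρ*,I_p]] and D = diag((I_p-ρρ*)^{-1/2},(I_p-ρ*ρ)^{-1/2}). -/
/-!
Write `C = [[a, b], [bᴴ, d]]` with `a, d > 0` (diagonal blocks of a positive definite matrix).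
The identity `C j C = j` reads `a² - b bᴴ = 1`, `a b = b d`, `d² - bᴴ b = 1`, so
`ρ = a⁻¹ b = b d⁻¹`, `1 - ρ ρᴴ = a⁻²` and `1 - ρᴴ ρ = d⁻²`. Thus `D = diag(a, d)` and
`D F = [[a, a ρ], [d ρᴴ, d]] = C`. Conversely, in any factorization `C = D F` the blocks of `C`
are `c₁₁ = d₁` and `c₁₂ = d₁ ρ`, which forces `ρ = c₁₁⁻¹ c₁₂`.
-/

open Matrix
open scoped ComplexOrder

noncomputable section

/-- The 2p×2p signature matrix j = diag(I_p, -I_p). -/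
def jmat (p : ℕ) : Matrix (Fin p ⊕ Fin p) (Fin p ⊕ Fin p) ℂ :=
  Matrix.fromBlocks 1 0 0 (-1)

namespace Matrix

variable {m n α : Type*}

section Ring

variable [Fintype m] [Fintype n] [DecidableEq m] [DecidableEq n] [Ring α]

theorem fromBlocks_diagonal_mul_fromBlocks_one (d₁ : Matrix m m α) (d₂ : Matrix n n α)
    (ρ : Matrix m n α) (σ : Matrix n m α) :
    fromBlocks d₁ 0 0 d₂ * fromBlocks 1 ρ σ 1 = fromBlocks d₁ (d₁ * ρ) (d₂ * σ) d₂ := by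
  simp [fromBlocks_multiply]

theorem fromBlocks_mul_signature_mul (a : Matrix m m α) (b : Matrix m n α) (c : Matrix n m α)
    (d : Matrix n n α) :
    fromBlocks a b c d * fromBlocks 1 0 0 (-1) * fromBlocks a b c d =
      fromBlocks (a * a - b * c) (a * b - b * d) (c * a - d * c) (c * b - d * d) := by
  simp [fromBlocks_multiply, sub_eq_add_neg, add_comm]

end Ring

theorem IsHermitian.toBlocks₂₁_eq [InvolutiveStar α] {C : Matrix (m ⊕ n) (m ⊕ n) α}
    (hC : C.IsHermitian) : C.toBlocks₂₁ = C.toBlocks₁₂ᴴ :=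
  (isHermitian_fromBlocks_iff.mp ((fromBlocks_toBlocks C).symm ▸ hC)).right.left.symm

theorem PosDef.toBlocks₁₁ [Fintype m] [Fintype n] [Ring α] [PartialOrder α] [StarRing α]
    {C : Matrix (m ⊕ n) (m ⊕ n) α} (hC : C.PosDef) : C.toBlocks₁₁.PosDef :=
  hC.submatrix Sum.inl_injective

theorem PosDef.toBlocks₂₂ [Fintype m] [Fintype n] [Ring α] [PartialOrder α] [StarRing α]
    {C : Matrix (m ⊕ n) (m ⊕ n) α} (hC : C.PosDef) : C.toBlocks₂₂.PosDef :=
  hC.submatrix Sum.inr_injective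

theorem PosDef.mul_self [Fintype m] [DecidableEq m] [Field α] [PartialOrder α] [StarRing α]
    [StarOrderedRing α] {A : Matrix m m α} (hA : A.PosDef) : (A * A).PosDef := by
  simpa [hA.isHermitian.eq] using
    PosDef.conjTranspose_mul_self A (mulVec_injective_iff_isUnit.mpr hA.isUnit)

section CommRing

variable [Fintype m] [Fintype n] [DecidableEq m] [CommRing α]

theorem IsHermitian.toBlocks_of_mul_signature_mul_eq [DecidableEq n] [StarRing α]
    {C : Matrix (m ⊕ n) (m ⊕ n) α} (hC : C.IsHermitian)
    (h : C * Matrix.fromBlocks 1 0 0 (-1) * C = Matrix.fromBlocks 1 0 0 (-1)) :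
    C.toBlocks₁₁ * C.toBlocks₁₁ - C.toBlocks₁₂ * C.toBlocks₁₂ᴴ = 1 ∧
      C.toBlocks₁₁ * C.toBlocks₁₂ = C.toBlocks₁₂ * C.toBlocks₂₂ ∧
      C.toBlocks₂₂ * C.toBlocks₂₂ - C.toBlocks₁₂ᴴ * C.toBlocks₁₂ = 1 := by
  rw [← fromBlocks_toBlocks C, hC.toBlocks₂₁_eq, fromBlocks_mul_signature_mul,
    fromBlocks_inj] at h
  obtain ⟨h₁₁, h₁₂, -, h₂₂⟩ := h
  refine ⟨h₁₁, sub_eq_zero.mp h₁₂, ?_⟩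
  rw [← neg_sub, h₂₂, neg_neg]

theorem inv_mul_eq_mul_inv_of_mul_eq [DecidableEq n] {a : Matrix m m α} {b : Matrix m n α}
    {d : Matrix n n α} (ha : IsUnit a) (hd : IsUnit d) (h : a * b = b * d) :
    a⁻¹ * b = b * d⁻¹ := by
  calc a⁻¹ * b = a⁻¹ * (b * d * d⁻¹) := by
        rw [Matrix.mul_assoc, mul_nonsing_inv _ ((isUnit_iff_isUnit_det d).mp hd), Matrix.mul_one]
    _ = a⁻¹ * (a * (b * d⁻¹)) := by rw [← Matrix.mul_assoc a, h, Matrix.mul_assoc]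
    _ = b * d⁻¹ := nonsing_inv_mul_cancel_left _ _ ((isUnit_iff_isUnit_det a).mp ha)

theorem conjTranspose_inv_mul_of_mul_eq [DecidableEq n] [StarRing α] {a : Matrix m m α}
    {b : Matrix m n α} {d : Matrix n n α} (hd : d.IsHermitian) (haU : IsUnit a) (hdU : IsUnit d)
    (h : a * b = b * d) : (a⁻¹ * b)ᴴ = d⁻¹ * bᴴ := by
  rw [inv_mul_eq_mul_inv_of_mul_eq haU hdU h, conjTranspose_mul, conjTranspose_nonsing_inv, hd.eq]

theorem one_sub_inv_mul_mul_conjTranspose [StarRing α] {a : Matrix m m α} {b : Matrix m n α}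
    (ha : a.IsHermitian) (haU : IsUnit a) (h : a * a - b * bᴴ = 1) :
    1 - a⁻¹ * b * (a⁻¹ * b)ᴴ = a⁻¹ * a⁻¹ := by
  have hdet := (isUnit_iff_isUnit_det a).mp haU
  have hbb : b * bᴴ = a * a - 1 := by rw [← h, sub_sub_cancel]
  calc 1 - a⁻¹ * b * (a⁻¹ * b)ᴴ = 1 - a⁻¹ * (b * bᴴ) * a⁻¹ := by
        rw [conjTranspose_mul, conjTranspose_nonsing_inv, ha.eq]
        simp only [Matrix.mul_assoc]
    _ = a⁻¹ * a⁻¹ := by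
        rw [hbb, Matrix.mul_sub, Matrix.sub_mul, nonsing_inv_mul_cancel_left _ _ hdet,
          mul_nonsing_inv a hdet, Matrix.mul_one, sub_sub_cancel]

theorem eq_toBlocks₁₁_inv_mul_toBlocks₁₂ [DecidableEq n] {C : Matrix (m ⊕ n) (m ⊕ n) α}
    {d₁ : Matrix m m α} {d₂ : Matrix n n α} {ρ : Matrix m n α} {σ : Matrix n m α}
    (hd₁ : IsUnit d₁) (h : C = fromBlocks d₁ 0 0 d₂ * fromBlocks 1 ρ σ 1) :
    ρ = C.toBlocks₁₁⁻¹ * C.toBlocks₁₂ := by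
  rw [h, fromBlocks_diagonal_mul_fromBlocks_one, toBlocks_fromBlocks₁₁, toBlocks_fromBlocks₁₂]
  exact (nonsing_inv_mul_cancel_left _ _ ((isUnit_iff_isUnit_det d₁).mp hd₁)).symm

theorem IsHermitian.eq_fromBlocks_mul_fromBlocks_inv_mul [DecidableEq n] [StarRing α]
    {C : Matrix (m ⊕ n) (m ⊕ n) α} (hC : C.IsHermitian) (ha : IsUnit C.toBlocks₁₁)
    (hd : IsUnit C.toBlocks₂₂) (h : C.toBlocks₁₁ * C.toBlocks₁₂ = C.toBlocks₁₂ * C.toBlocks₂₂) :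
    C = Matrix.fromBlocks C.toBlocks₁₁ 0 0 C.toBlocks₂₂ *
      Matrix.fromBlocks 1 (C.toBlocks₁₁⁻¹ * C.toBlocks₁₂) (C.toBlocks₁₁⁻¹ * C.toBlocks₁₂)ᴴ 1 := by
  have hdH : C.toBlocks₂₂.IsHermitian := hC.submatrix Sum.inr
  rw [fromBlocks_diagonal_mul_fromBlocks_one,
    mul_nonsing_inv_cancel_left _ _ ((isUnit_iff_isUnit_det _).mp ha),
    conjTranspose_inv_mul_of_mul_eq hdH ha hd h, ← hC.toBlocks₂₁_eq,
    mul_nonsing_inv_cancel_left _ _ ((isUnit_iff_isUnit_det _).mp hd),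
    fromBlocks_toBlocks]

end CommRing

end Matrix

/-- for a positive definite j-unitary C = [[c11,c12],[c21,c22]],
the block c11 is invertible and ρ = c11⁻¹ c12 is the unique matrix realizing
the Halmos extension representation C = D·F. -/
theorem halmos_coefficient_unique (p : ℕ)
    (C : Matrix (Fin p ⊕ Fin p) (Fin p ⊕ Fin p) ℂ)
    (hC : C.PosDef) (hCjC : C * jmat p * C = jmat p) :
    IsUnit C.toBlocks₁₁ ∧
    (∃ d₁ d₂ : Matrix (Fin p) (Fin p) ℂ,
      (1 - (C.toBlocks₁₁⁻¹ * C.toBlocks₁₂)ᴴ * (C.toBlocks₁₁⁻¹ * C.toBlocks₁₂)).PosDef ∧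
      d₁.PosDef ∧ d₂.PosDef ∧
      d₁ * d₁ = (1 - (C.toBlocks₁₁⁻¹ * C.toBlocks₁₂) * (C.toBlocks₁₁⁻¹ * C.toBlocks₁₂)ᴴ)⁻¹ ∧
      d₂ * d₂ = (1 - (C.toBlocks₁₁⁻¹ * C.toBlocks₁₂)ᴴ * (C.toBlocks₁₁⁻¹ * C.toBlocks₁₂))⁻¹ ∧
      C = Matrix.fromBlocks d₁ 0 0 d₂ *
        Matrix.fromBlocks 1 (C.toBlocks₁₁⁻¹ * C.toBlocks₁₂) (C.toBlocks₁₁⁻¹ * C.toBlocks₁₂)ᴴ 1) ∧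
    (∀ ρ d₁ d₂ : Matrix (Fin p) (Fin p) ℂ,
      (1 - ρᴴ * ρ).PosDef → d₁.PosDef → d₂.PosDef →
      d₁ * d₁ = (1 - ρ * ρᴴ)⁻¹ → d₂ * d₂ = (1 - ρᴴ * ρ)⁻¹ →
      C = Matrix.fromBlocks d₁ 0 0 d₂ * Matrix.fromBlocks 1 ρ ρᴴ 1 →
      ρ = C.toBlocks₁₁⁻¹ * C.toBlocks₁₂) := by
  have ha := hC.toBlocks₁₁
  have hd := hC.toBlocks₂₂
  obtain ⟨h₁, h₂, h₃⟩ := hC.isHermitian.toBlocks_of_mul_signature_mul_eq hCjC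
  have hρH := conjTranspose_inv_mul_of_mul_eq hd.isHermitian ha.isUnit hd.isUnit h₂
  have hL := one_sub_inv_mul_mul_conjTranspose ha.isHermitian ha.isUnit h₁
  have hR := one_sub_inv_mul_mul_conjTranspose hd.isHermitian hd.isUnit
    (b := C.toBlocks₁₂ᴴ) (by rwa [conjTranspose_conjTranspose])
  rw [← hρH, conjTranspose_conjTranspose] at hR
  have inv_sq {x : Matrix (Fin p) (Fin p) ℂ} (hx : x.PosDef) : (x⁻¹ * x⁻¹)⁻¹ = x * x := by
    rw [Matrix.mul_inv_rev, nonsing_inv_nonsing_inv _ ((isUnit_iff_isUnit_det x).mp hx.isUnit)]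
  refine ⟨ha.isUnit, ⟨_, _, hR ▸ hd.inv.mul_self, ha, hd, by rw [hL, inv_sq ha],
    by rw [hR, inv_sq hd],
    hC.isHermitian.eq_fromBlocks_mul_fromBlocks_inv_mul ha.isUnit hd.isUnit h₂⟩,
    fun ρ d₁ d₂ _ hd₁ _ _ _ h => eq_toBlocks₁₁_inv_mul_toBlocks₁₂ hd₁.isUnit h⟩
end
end

section
/- Let H(n) = {H_{i+j-2}}_{i,j=1}^n be a self-adjoint n×n block Hankel matrix with p×p blocks (H_k = H_k*). Let A be the block lower shift matrix (A has I_p on its block subdiagonal and zeros elsewhere), Φ1 = -i·col(0, H_0, H_1, ..., H_{n-2}), Φ2 = col(I_p, 0, ..., 0), Π = [Φ1, Φ2], and J = [[0,I_p],[I_p,0]]. Then A H - H A* = i Π J Π*. -/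
open Matrix
open scoped ComplexOrder

noncomputable section

/-- The 2p×2p matrix J = [[0, I_p],[I_p, 0]]. -/
def Jmat (p : ℕ) : Matrix (Fin p ⊕ Fin p) (Fin p ⊕ Fin p) ℂ :=
  Matrix.fromBlocks 0 1 1 0

/-- The m×m block Hankel matrix H(m) = {H_{i+j-2}}_{i,j=1}^m built from the
p×p blocks `Hk 0, Hk 1, ...`. -/
def Hmat (p : ℕ) (Hk : ℕ → Matrix (Fin p) (Fin p) ℂ) (m : ℕ) :
    Matrix (Fin m × Fin p) (Fin m × Fin p) ℂ :=
  fun x y => Hk ((x.1 : ℕ) + (y.1 : ℕ)) x.2 y.2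

/-- The block lower shift matrix A (I_p on the block subdiagonal). -/
def Amat (p m : ℕ) : Matrix (Fin m × Fin p) (Fin m × Fin p) ℂ :=
  fun x y => if (x.1 : ℕ) = (y.1 : ℕ) + 1 ∧ x.2 = y.2 then 1 else 0

/-- Φ₁(m) = -i · col(0, H_0, H_1, ..., H_{m-2}). -/
def Phi1 (p : ℕ) (Hk : ℕ → Matrix (Fin p) (Fin p) ℂ) (m : ℕ) :
    Matrix (Fin m × Fin p) (Fin p) ℂ :=
  fun x b => if (x.1 : ℕ) = 0 then 0 else -Complex.I * Hk ((x.1 : ℕ) - 1) x.2 b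

/-- Φ₂(m) = col(I_p, 0, ..., 0). -/
def Phi2 (p m : ℕ) : Matrix (Fin m × Fin p) (Fin p) ℂ :=
  fun x b => if (x.1 : ℕ) = 0 ∧ x.2 = b then 1 else 0

/-- Π(m) = [Φ₁(m), Φ₂(m)]. -/
def Pmat (p : ℕ) (Hk : ℕ → Matrix (Fin p) (Fin p) ℂ) (m : ℕ) :
    Matrix (Fin m × Fin p) (Fin p ⊕ Fin p) ℂ :=
  Matrix.fromCols (Phi1 p Hk m) (Phi2 p m)

/-- The block row P₂ = [0, ..., 0, I_p] ∈ ℂ^{p×mp}. -/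
def P2 (p m : ℕ) : Matrix (Fin p) (Fin m × Fin p) ℂ :=
  fun a y => if (y.1 : ℕ) = m - 1 ∧ a = y.2 then 1 else 0

/-- The Verblunsky-type coefficients ω_k = P₂ T(k+1) Π(k+1) of a block Hankel matrix. -/
def omegaV (p : ℕ) (Hk : ℕ → Matrix (Fin p) (Fin p) ℂ) (k : ℕ) :
    Matrix (Fin p) (Fin p ⊕ Fin p) ℂ :=
  P2 p (k + 1) * (Hmat p Hk (k + 1))⁻¹ * Pmat p Hk (k + 1)

/-! Entrywise, left multiplication by `A` shifts block rows down and right multiplication by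
`A*` shifts block columns left, so in `A H - H A*` (block indices from 0) the Hankel entries
`H_{i+j-1}` cancel except in the first block row and column. There the difference is `-H_{j-1}`
and `H_{i-1}`, which is what `i Π J Π* = i (Φ₁ Φ₂* + Φ₂ Φ₁*)` contributes; in the first block
row this uses `H_k* = H_k`. -/

lemma Amat_mul_apply {p n : ℕ} {β : Type*} (M : Matrix (Fin n × Fin p) β ℂ)
    (x : Fin n × Fin p) (y : β) :
    (Amat p n * M) x y = if h : (x.1 : ℕ) = 0 then 0 else M (⟨x.1 - 1, by omega⟩, x.2) y := by
  rw [mul_apply]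
  split_ifs with hx
  · refine Finset.sum_eq_zero fun z _ => ?_
    simp [Amat, hx]
  · rw [Finset.sum_eq_single (⟨⟨x.1 - 1, by omega⟩, x.2⟩ : Fin n × Fin p)]
    · have hpred : (x.1 : ℕ) = x.1 - 1 + 1 := by omega
      simp [Amat, ← hpred]
    · rintro ⟨i, a⟩ _ hne
      simp only [Amat, ite_mul, one_mul, zero_mul, ite_eq_right_iff, and_imp]
      intro hi ha
      exact absurd (Prod.ext (Fin.ext (by simp; omega)) ha.symm) hne
    · simp

lemma mul_conjTranspose_Amat_apply {p n : ℕ} {β : Type*} (M : Matrix β (Fin n × Fin p) ℂ)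
    (x : β) (y : Fin n × Fin p) :
    (M * (Amat p n)ᴴ) x y = if h : (y.1 : ℕ) = 0 then 0 else M x (⟨y.1 - 1, by omega⟩, y.2) := by
  rw [← conjTranspose_conjTranspose M, ← conjTranspose_mul, conjTranspose_apply,
    Amat_mul_apply]
  split_ifs <;> simp

lemma Phi2_mul_apply {p n : ℕ} {β : Type*} (N : Matrix (Fin p) β ℂ)
    (x : Fin n × Fin p) (y : β) :
    (Phi2 p n * N) x y = if (x.1 : ℕ) = 0 then N x.2 y else 0 := by
  simp [mul_apply, Phi2, ite_and]

lemma mul_conjTranspose_Phi2_apply {p n : ℕ} {β : Type*} (N : Matrix β (Fin p) ℂ)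
    (x : β) (y : Fin n × Fin p) :
    (N * (Phi2 p n)ᴴ) x y = if (y.1 : ℕ) = 0 then N x y.2 else 0 := by
  rw [← conjTranspose_conjTranspose N, ← conjTranspose_mul, conjTranspose_apply,
    Phi2_mul_apply]
  split_ifs <;> simp

lemma fromCols_mul_Jmat_mul_conjTranspose {p : ℕ} {m : Type*} [Fintype m]
    (A B : Matrix m (Fin p) ℂ) :
    fromCols A B * Jmat p * (fromCols A B)ᴴ = A * Bᴴ + B * Aᴴ := by
  rw [Jmat, fromCols_mul_fromBlocks, conjTranspose_fromCols_eq_fromRows_conjTranspose,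
    fromCols_mul_fromRows]
  simp [add_comm]

/-- the operator identity A H - H A* = i Π J Π* for a self-adjoint
block Hankel matrix H(n). -/
theorem hankel_operator_identity (n p : ℕ)
    (Hk : ℕ → Matrix (Fin p) (Fin p) ℂ)
    (hself : ∀ k, (Hk k)ᴴ = Hk k) :
    Amat p n * Hmat p Hk n - Hmat p Hk n * (Amat p n)ᴴ =
      Complex.I • (Pmat p Hk n * Jmat p * (Pmat p Hk n)ᴴ) := by
  have hstar : ∀ k a b, star (Hk k b a) = Hk k a b := fun k => IsHermitian.apply (hself k)
  ext x y
  rw [Pmat, fromCols_mul_Jmat_mul_conjTranspose, Matrix.sub_apply, Amat_mul_apply,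
    mul_conjTranspose_Amat_apply, Matrix.smul_apply, Matrix.add_apply,
    mul_conjTranspose_Phi2_apply, Phi2_mul_apply, conjTranspose_apply]
  by_cases hx : (x.1 : ℕ) = 0 <;> by_cases hy : (y.1 : ℕ) = 0
  · simp [hx, hy, Phi1]
  · simp [hx, hy, Phi1, Hmat, hstar, ← mul_assoc]
  · simp [hx, hy, Phi1, Hmat, ← mul_assoc]
  · have hshift : (x.1 : ℕ) - 1 + y.1 = x.1 + (y.1 - 1) := by omega
    simp [hx, hy, Hmat, hshift]
end
end
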